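/- arXiv:hep-th/0503012 — 5 statements merged into one kernel-verified Lean document; each statement's English description precedes it below -/
import Mathlib

section
/- Let λ ∈ ℝ, λ ≠ 0. On smooth complex-valued functions on (0,∞)×ℝ define N = −i(η₀η₁∂₀ + (log η₀)∂₁), and the multiplication operators P (by λ⁻¹η₁) and E (by λ⁻¹log η₀). Then [N,E] = −iP and [N,P] = −iE, i.e. {E,P,N} close the undeformed two-dimensional Poincaré algebra: for every smooth f : (0,∞)×ℝ → ℂ and every point, N(Ef) − E(Nf) = −i·(Pf) and N(Pf) − P(Nf) = −i·(Ef). -/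
/-- Partial derivative with respect to `η₀`. -/
noncomputable def pd0 (f : ℝ × ℝ → ℂ) (η : ℝ × ℝ) : ℂ := fderiv ℝ f η (1, 0)

/-- Partial derivative with respect to `η₁`. -/
noncomputable def pd1 (f : ℝ × ℝ → ℂ) (η : ℝ × ℝ) : ℂ := fderiv ℝ f η (0, 1)

/-- The open set `(0,∞)×ℝ`. -/
def upperHalf : Set (ℝ × ℝ) := {η | 0 < η.1}

/-- The boost generator `N = −i(η₀η₁∂₀ + (log η₀)∂₁)`. -/
noncomputable def opN (f : ℝ × ℝ → ℂ) (η : ℝ × ℝ) : ℂ :=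
  -Complex.I * ((η.1 : ℂ) * (η.2 : ℂ) * pd0 f η + ((Real.log η.1 : ℝ) : ℂ) * pd1 f η)

/-- The momentum `P`: multiplication by `λ⁻¹η₁`. -/
noncomputable def opP (l : ℝ) (f : ℝ × ℝ → ℂ) (η : ℝ × ℝ) : ℂ :=
  ((l⁻¹ : ℝ) : ℂ) * (η.2 : ℂ) * f η

/-- The energy `E`: multiplication by `λ⁻¹ log η₀`. -/
noncomputable def opE (l : ℝ) (f : ℝ × ℝ → ℂ) (η : ℝ × ℝ) : ℂ :=
  ((l⁻¹ : ℝ) : ℂ) * ((Real.log η.1 : ℝ) : ℂ) * f η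

/-- `{E,P,N}` close the undeformed two-dimensional Poincaré algebra:
`[N,E] = −iP` and `[N,P] = −iE`. -/
theorem poincare_algebra (l : ℝ) (hl : l ≠ 0) (f : ℝ × ℝ → ℂ)
    (hf : ContDiffOn ℝ (⊤ : ℕ∞) f upperHalf) (η : ℝ × ℝ) (hη : η ∈ upperHalf) :
    opN (opE l f) η - opE l (opN f) η = -Complex.I * opP l f η ∧
    opN (opP l f) η - opP l (opN f) η = -Complex.I * opE l f η := by
  have h0 : (0:ℝ) < η.1 := hη
  have hopen : IsOpen upperHalf := isOpen_lt continuous_const continuous_fst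
  have hdf : DifferentiableAt ℝ f η :=
    (hf.contDiffAt (hopen.mem_nhds hη)).differentiableAt (by simp)
  have hF : HasFDerivAt f (fderiv ℝ f η) η := hdf.hasFDerivAt
  have hlog : HasFDerivAt (fun x : ℝ × ℝ => ((Real.log x.1 : ℝ) : ℂ))
      (Complex.ofRealCLM.comp ((η.1)⁻¹ • ContinuousLinearMap.fst ℝ ℝ ℝ)) η :=
    Complex.ofRealCLM.hasFDerivAt.comp η
      ((Real.hasDerivAt_log h0.ne').comp_hasFDerivAt η hasFDerivAt_fst)
  have hsnd : HasFDerivAt (fun x : ℝ × ℝ => ((x.2 : ℝ) : ℂ))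
      (Complex.ofRealCLM.comp (ContinuousLinearMap.snd ℝ ℝ ℝ)) η :=
    Complex.ofRealCLM.hasFDerivAt.comp η hasFDerivAt_snd
  have hEq : opE l f = fun y => ((l⁻¹ : ℝ) : ℂ) * (((Real.log y.1 : ℝ) : ℂ) * f y) := by
    funext y; simp [opE, mul_assoc]
  have hPq : opP l f = fun y => ((l⁻¹ : ℝ) : ℂ) * (((y.2 : ℝ) : ℂ) * f y) := by
    funext y; simp [opP, mul_assoc]
  have hEf : HasFDerivAt (fun y : ℝ × ℝ => ((l⁻¹ : ℝ) : ℂ) * (((Real.log y.1 : ℝ) : ℂ) * f y)) _ η := (hlog.mul hF).const_mul ((l⁻¹ : ℝ) : ℂ)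
  have hPf : HasFDerivAt (fun y : ℝ × ℝ => ((l⁻¹ : ℝ) : ℂ) * (((y.2 : ℝ) : ℂ) * f y)) _ η := (hsnd.mul hF).const_mul ((l⁻¹ : ℝ) : ℂ)
  have e0 : pd0 (opE l f) η =
      ((l⁻¹ : ℝ) : ℂ) * (((Real.log η.1 : ℝ) : ℂ) * pd0 f η + f η * (((η.1)⁻¹ : ℝ) : ℂ)) := by
    rw [pd0, hEq, hEf.fderiv]; simp [pd0]; ring
  have e1 : pd1 (opE l f) η =
      ((l⁻¹ : ℝ) : ℂ) * (((Real.log η.1 : ℝ) : ℂ) * pd1 f η) := by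
    rw [pd1, hEq, hEf.fderiv]; simp [pd1]
  have p0 : pd0 (opP l f) η = ((l⁻¹ : ℝ) : ℂ) * (((η.2 : ℝ) : ℂ) * pd0 f η) := by
    rw [pd0, hPq, hPf.fderiv]; simp [pd0]
  have p1 : pd1 (opP l f) η =
      ((l⁻¹ : ℝ) : ℂ) * (((η.2 : ℝ) : ℂ) * pd1 f η + f η) := by
    rw [pd1, hPq, hPf.fderiv]; simp [pd1]; ring
  have h1 : ((η.1 : ℝ) : ℂ) ≠ 0 := Complex.ofReal_ne_zero.mpr h0.ne'
  have hcl : ((l : ℝ) : ℂ) ≠ 0 := Complex.ofReal_ne_zero.mpr hl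
  constructor
  · simp only [opN, opE, opP, e0, e1]
    push_cast
    field_simp
    ring
  · simp only [opN, opE, opP, p0, p1]
    push_cast
    field_simp
    ring
end

section
/- Let λ ∈ ℝ, λ ≠ 0. On smooth complex-valued functions on (0,∞)×ℝ define the operators x = iλ∂₁, t = iλ(η₀∂₀ + η₁∂₁), N = −i(η₀η₁∂₀ + (log η₀)∂₁), and the multiplication operators P (by λ⁻¹η₁) and E (by λ⁻¹log η₀). Then the boost acts nonlinearly on the κ-Minkowski coordinates: [N,x] = i(t − λPx) and [N,t] = i(1 − λE − λ²P²)x + iλPt, as identities of operators on smooth functions. Equivalently, N = −Pt − (E − λP²)x. -/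
/-- The coordinate `x = iλ∂₁`. -/
noncomputable def opX (l : ℝ) (f : ℝ × ℝ → ℂ) (η : ℝ × ℝ) : ℂ :=
  Complex.I * (l : ℂ) * pd1 f η

/-- The coordinate `t = iλ(η₀∂₀ + η₁∂₁)`. -/
noncomputable def opT (l : ℝ) (f : ℝ × ℝ → ℂ) (η : ℝ × ℝ) : ℂ :=
  Complex.I * (l : ℂ) * ((η.1 : ℂ) * pd0 f η + (η.2 : ℂ) * pd1 f η)

/-- The boost acts nonlinearly on the κ-Minkowski coordinates:
`[N,x] = i(t − λPx)`, `[N,t] = i(1 − λE − λ²P²)x + iλPt`; equivalently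
`N = −Pt − (E − λP²)x`. -/
theorem boost_action_on_coordinates (l : ℝ) (hl : l ≠ 0) (f : ℝ × ℝ → ℂ)
    (hf : ContDiffOn ℝ (⊤ : ℕ∞) f upperHalf) (η : ℝ × ℝ) (hη : η ∈ upperHalf) :
    opN (opX l f) η - opX l (opN f) η =
      Complex.I * (opT l f η - (l : ℂ) * opP l (opX l f) η) ∧
    opN (opT l f) η - opT l (opN f) η =
      Complex.I * (opX l f η - (l : ℂ) * opE l (opX l f) η
        - ((l : ℂ))^2 * opP l (opP l (opX l f)) η)
      + Complex.I * (l : ℂ) * opP l (opT l f) η ∧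
    opN f η = -(opP l (opT l f) η) - (opE l (opX l f) η - (l : ℂ) * opP l (opP l (opX l f)) η) := by
  have hη1 : (0:ℝ) < η.1 := hη
  have hu0 : (η.1 : ℂ) ≠ 0 := by exact_mod_cast hη1.ne'
  have hlc : (l : ℂ) ≠ 0 := by exact_mod_cast hl
  have hopen : IsOpen upperHalf := isOpen_lt continuous_const continuous_fst
  have hmem : upperHalf ∈ nhds η := hopen.mem_nhds hη
  have hfc : ContDiffAt ℝ (⊤ : ℕ∞) f η := hf.contDiffAt hmem
  have h1 : ContDiffAt ℝ (⊤ : ℕ∞) (fderiv ℝ f) η := hfc.fderiv_right (by simp)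
  have hA : DifferentiableAt ℝ (fderiv ℝ f) η := h1.differentiableAt (by simp)
  set A := fderiv ℝ (fderiv ℝ f) η with hAdef
  -- second derivatives
  have key : ∀ v w : ℝ × ℝ, fderiv ℝ (fun y => fderiv ℝ f y v) η w = A w v := by
    intro v w
    rw [fderiv_clm_apply hA (differentiableAt_const v)]
    simp [hAdef]
  have hsymm : A (0,1) (1,0) = A (1,0) (0,1) := by
    have hev : ∀ᶠ y in nhds η, HasFDerivAt f (fderiv ℝ f y) y := by
      filter_upwards [hmem] with y hy
      exact ((hf.contDiffAt (hopen.mem_nhds hy)).differentiableAt (by simp)).hasFDerivAt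
    exact second_derivative_symmetric_of_eventually_of_real hev hA.hasFDerivAt _ _
  have hdv : ∀ v : ℝ × ℝ, DifferentiableAt ℝ (fun y => fderiv ℝ f y v) η :=
    fun v => hA.clm_apply (differentiableAt_const v)
  -- coefficient functions
  have hcu : HasFDerivAt (fun y : ℝ × ℝ => ((y.1 : ℝ) : ℂ))
      (Complex.ofRealCLM.comp (ContinuousLinearMap.fst ℝ ℝ ℝ)) η :=
    Complex.ofRealCLM.hasFDerivAt.comp η hasFDerivAt_fst
  have hcw : HasFDerivAt (fun y : ℝ × ℝ => ((y.2 : ℝ) : ℂ))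
      (Complex.ofRealCLM.comp (ContinuousLinearMap.snd ℝ ℝ ℝ)) η :=
    Complex.ofRealCLM.hasFDerivAt.comp η hasFDerivAt_snd
  have hlog0 : HasFDerivAt (fun y : ℝ × ℝ => Real.log y.1)
      ((η.1)⁻¹ • ContinuousLinearMap.fst ℝ ℝ ℝ) η :=
    (Real.hasDerivAt_log hη1.ne').comp_hasFDerivAt η hasFDerivAt_fst
  have hcL : HasFDerivAt (fun y : ℝ × ℝ => ((Real.log y.1 : ℝ) : ℂ))
      (Complex.ofRealCLM.comp ((η.1)⁻¹ • ContinuousLinearMap.fst ℝ ℝ ℝ)) η :=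
    Complex.ofRealCLM.hasFDerivAt.comp η hlog0
  have du : ∀ a b : ℝ, fderiv ℝ (fun y : ℝ × ℝ => ((y.1 : ℝ) : ℂ)) η (a, b) = (a : ℂ) := by
    intro a b; rw [hcu.fderiv]; simp
  have dw : ∀ a b : ℝ, fderiv ℝ (fun y : ℝ × ℝ => ((y.2 : ℝ) : ℂ)) η (a, b) = (b : ℂ) := by
    intro a b; rw [hcw.fderiv]; simp
  have dL : ∀ a b : ℝ, fderiv ℝ (fun y : ℝ × ℝ => ((Real.log y.1 : ℝ) : ℂ)) η (a, b)
      = (a : ℂ) * ((η.1 : ℂ))⁻¹ := by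
    intro a b; rw [hcL.fderiv]; simp [smul_eq_mul]; ring
  -- product rule, pointwise
  have hmulv : ∀ (c g : ℝ × ℝ → ℂ), DifferentiableAt ℝ c η → DifferentiableAt ℝ g η →
      ∀ w, fderiv ℝ (fun y => c y * g y) η w
        = fderiv ℝ c η w * g η + c η * fderiv ℝ g η w := by
    intro c g hc hg w
    rw [fderiv_fun_mul hc hg]
    simp [smul_eq_mul]; ring
  -- shorthand
  set F0 := fderiv ℝ f η (1, 0) with hF0
  set F1 := fderiv ℝ f η (0, 1) with hF1
  -- derivatives of opX l f
  have hXfun : opX l f = fun y => Complex.I * (l : ℂ) * (fun y => fderiv ℝ f y (0,1)) y := rfl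
  have hX : ∀ v : ℝ × ℝ, fderiv ℝ (opX l f) η v = Complex.I * (l : ℂ) * A v (0,1) := by
    intro v
    rw [hXfun, fderiv_const_mul (hdv (0,1))]
    simp [key]
  -- derivatives of opT l f
  have hTfun : opT l f = fun y => Complex.I * (l : ℂ) *
      ((fun y : ℝ × ℝ => ((y.1:ℝ):ℂ)) y * (fun y => fderiv ℝ f y (1,0)) y
        + (fun y : ℝ × ℝ => ((y.2:ℝ):ℂ)) y * (fun y => fderiv ℝ f y (0,1)) y) := rfl
  have hTin : DifferentiableAt ℝ (fun y : ℝ × ℝ =>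
      (fun y : ℝ × ℝ => ((y.1:ℝ):ℂ)) y * (fun y => fderiv ℝ f y (1,0)) y
        + (fun y : ℝ × ℝ => ((y.2:ℝ):ℂ)) y * (fun y => fderiv ℝ f y (0,1)) y) η :=
    ((hcu.differentiableAt.mul (hdv (1,0))).add (hcw.differentiableAt.mul (hdv (0,1))))
  have hT : ∀ a b : ℝ, fderiv ℝ (opT l f) η (a, b) = Complex.I * (l : ℂ) *
      ((a:ℂ) * F0 + (η.1:ℂ) * A (a,b) (1,0) + (b:ℂ) * F1 + (η.2:ℂ) * A (a,b) (0,1)) := by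
    intro a b
    rw [hTfun, fderiv_const_mul hTin]
    simp only [ContinuousLinearMap.smul_apply, smul_eq_mul]
    rw [fderiv_fun_add (f := fun y : ℝ × ℝ => ((y.1:ℝ):ℂ) * fderiv ℝ f y (1,0))
      (g := fun y : ℝ × ℝ => ((y.2:ℝ):ℂ) * fderiv ℝ f y (0,1)) (hcu.differentiableAt.mul (hdv (1,0))) (hcw.differentiableAt.mul (hdv (0,1)))]
    simp only [ContinuousLinearMap.add_apply]
    rw [hmulv _ _ hcu.differentiableAt (hdv (1,0)), hmulv _ _ hcw.differentiableAt (hdv (0,1))]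
    rw [du, dw, key, key]
    ring
  -- derivatives of opN f
  have hNfun : opN f = fun y => -Complex.I *
      (((fun y : ℝ × ℝ => ((y.1:ℝ):ℂ)) y * (fun y : ℝ × ℝ => ((y.2:ℝ):ℂ)) y)
          * (fun y => fderiv ℝ f y (1,0)) y
        + (fun y : ℝ × ℝ => ((Real.log y.1 : ℝ):ℂ)) y * (fun y => fderiv ℝ f y (0,1)) y) := rfl
  have hNin : DifferentiableAt ℝ (fun y : ℝ × ℝ =>
      ((fun y : ℝ × ℝ => ((y.1:ℝ):ℂ)) y * (fun y : ℝ × ℝ => ((y.2:ℝ):ℂ)) y)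
          * (fun y => fderiv ℝ f y (1,0)) y
        + (fun y : ℝ × ℝ => ((Real.log y.1 : ℝ):ℂ)) y * (fun y => fderiv ℝ f y (0,1)) y) η :=
    (((hcu.differentiableAt.mul hcw.differentiableAt).mul (hdv (1,0))).add
      (hcL.differentiableAt.mul (hdv (0,1))))
  have hN : ∀ a b : ℝ, fderiv ℝ (opN f) η (a, b) = -Complex.I *
      (((a:ℂ) * (η.2:ℂ) + (η.1:ℂ) * (b:ℂ)) * F0 + (η.1:ℂ) * (η.2:ℂ) * A (a,b) (1,0)
        + (a:ℂ) * ((η.1:ℂ))⁻¹ * F1 + ((Real.log η.1 : ℝ):ℂ) * A (a,b) (0,1)) := by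
    intro a b
    rw [hNfun, fderiv_const_mul hNin]
    simp only [ContinuousLinearMap.smul_apply, smul_eq_mul]
    rw [fderiv_fun_add (f := fun y : ℝ × ℝ => ((y.1:ℝ):ℂ) * ((y.2:ℝ):ℂ) * fderiv ℝ f y (1,0))
      (g := fun y : ℝ × ℝ => ((Real.log y.1 : ℝ):ℂ) * fderiv ℝ f y (0,1))
      ((hcu.differentiableAt.mul hcw.differentiableAt).mul (hdv (1,0)))
      (hcL.differentiableAt.mul (hdv (0,1)))]
    simp only [ContinuousLinearMap.add_apply]
    rw [hmulv (fun y : ℝ × ℝ => ((y.1:ℝ):ℂ) * ((y.2:ℝ):ℂ)) _ (hcu.differentiableAt.mul hcw.differentiableAt) (hdv (1,0)),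
      hmulv _ _ hcL.differentiableAt (hdv (0,1)),
      hmulv _ _ hcu.differentiableAt hcw.differentiableAt]
    rw [du, dw, dL, key, key]
    ring
  refine ⟨?_, ?_, ?_⟩
  · show -Complex.I * ((η.1:ℂ) * (η.2:ℂ) * fderiv ℝ (opX l f) η (1,0)
        + ((Real.log η.1 : ℝ):ℂ) * fderiv ℝ (opX l f) η (0,1))
      - Complex.I * (l:ℂ) * fderiv ℝ (opN f) η (0,1) = _
    rw [hX (1,0), hX (0,1), hN 0 1]
    simp only [opT, opP, opX, opN, pd0, pd1]
    push_cast
    rw [hsymm]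
    field_simp
    ring
  · show -Complex.I * ((η.1:ℂ) * (η.2:ℂ) * fderiv ℝ (opT l f) η (1,0)
        + ((Real.log η.1 : ℝ):ℂ) * fderiv ℝ (opT l f) η (0,1))
      - Complex.I * (l:ℂ) * ((η.1:ℂ) * fderiv ℝ (opN f) η (1,0)
        + (η.2:ℂ) * fderiv ℝ (opN f) η (0,1)) = _
    rw [hT 1 0, hT 0 1, hN 1 0, hN 0 1]
    simp only [opT, opP, opX, opN, opE, pd0, pd1]
    push_cast
    rw [hsymm]
    field_simp
    ring
  · simp only [opN, opT, opP, opX, opE, pd0, pd1]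
    push_cast
    field_simp
    ring
end

section
/- Let λ ∈ ℝ, let μ be any (σ-finite) measure on ℝ, and let H_μ = L²(ℝ×ℝ*, μ ⊗ |η₁|⁻¹dη₁) be the Hilbert space of square-integrable functions on ℝ×(ℝ\{0}) with respect to the product of μ (in the variable η₀) and the measure with density |η₁|⁻¹ (in the variable η₁). For p = (p₀,p₁) ∈ ℝ² define (π(p)ψ)(η₀,η₁) = e^{i(p₀η₀ + p₁η₁)}·ψ(η₀, η₁e^{λp₀}). Then each π(p) is a unitary operator on H_μ, and π is a unitary representation of the group G = (ℝ², ∔): π(p)π(p') = π(p₀+p'₀, p₁+p'₁e^{λp₀}) for all p, p' ∈ ℝ². -/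
open MeasureTheory

/-- The dilation-invariant measure `|η₁|⁻¹dη₁` on `ℝ* = ℝ \ {0}`. -/
noncomputable def nuStar : Measure ℝ :=
  (volume.restrict ({0}ᶜ : Set ℝ)).withDensity (fun η₁ => ENNReal.ofReal |η₁|⁻¹)

/-- The measure of the Hilbert space `H_μ = L²(ℝ×ℝ*, μ ⊗ |η₁|⁻¹dη₁)`. -/
noncomputable def Hmeas (μ : Measure ℝ) : Measure (ℝ × ℝ) := μ.prod nuStar

/-- The representation `(π(p)ψ)(η₀,η₁) = e^{i(p₀η₀+p₁η₁)}ψ(η₀, η₁e^{λp₀})`. -/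
noncomputable def piRep (l : ℝ) (p : ℝ × ℝ) (ψ : ℝ × ℝ → ℂ) (η : ℝ × ℝ) : ℂ :=
  Complex.exp (Complex.I * ((p.1 : ℂ) * (η.1 : ℂ) + (p.2 : ℂ) * (η.2 : ℂ))) *
    ψ (η.1, η.2 * Real.exp (l * p.1))

/-!
The phase `e^{i(p₀η₀+p₁η₁)}` has modulus one, so `‖π(p)ψ‖²` is `‖ψ‖²` composed with the
dilation `(η₀, η₁) ↦ (η₀, η₁e^{λp₀})`, which preserves `μ ⊗ |η₁|⁻¹dη₁`: a dilation by `a`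
multiplies Lebesgue measure by `|a|⁻¹` and the density `|η₁|⁻¹` by `|a|`.
-/

lemma nuStar_eq_withDensity : nuStar = volume.withDensity fun x => ENNReal.ofReal |x|⁻¹ := by
  have h : ({0}ᶜ : Set ℝ) =ᵐ[volume] Set.univ := by simp [ae_eq_univ]
  rw [nuStar, Measure.restrict_congr_set h, Measure.restrict_univ]

lemma lintegral_comp_mul_right_nuStar {a : ℝ} (ha : a ≠ 0) {F : ℝ → ENNReal}
    (hF : Measurable F) : ∫⁻ x, F (x * a) ∂nuStar = ∫⁻ x, F x ∂nuStar := by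
  set g : ℝ → ENNReal := fun x => ENNReal.ofReal |x|⁻¹
  have hg : Measurable g := by fun_prop
  have hdensity : ∀ x, g x = ENNReal.ofReal |a| * g (x * a) := fun x => by
    simp only [g]
    rw [← ENNReal.ofReal_mul (abs_nonneg a), abs_mul, mul_inv, mul_left_comm,
      mul_inv_cancel₀ (abs_ne_zero.2 ha), mul_one]
  rw [nuStar_eq_withDensity, lintegral_withDensity_eq_lintegral_mul _ hg (by fun_prop),
    lintegral_withDensity_eq_lintegral_mul _ hg hF]
  calc ∫⁻ x, g x * F (x * a)
      = ENNReal.ofReal |a| * ∫⁻ y, g y * F y ∂(Measure.map (· * a) volume) := by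
        rw [lintegral_map (f := fun y => g y * F y) (hg.mul hF) (measurable_mul_const a),
          ← lintegral_const_mul _ (by fun_prop)]
        exact lintegral_congr fun x => by rw [hdensity x, mul_assoc]
    _ = ∫⁻ y, g y * F y := by
        rw [Real.map_volume_mul_right ha, lintegral_smul_measure, smul_eq_mul, ← mul_assoc,
          ← ENNReal.ofReal_mul (abs_nonneg a), abs_inv, mul_inv_cancel₀ (abs_ne_zero.2 ha),
          ENNReal.ofReal_one, one_mul]

lemma measurePreserving_mul_right_nuStar {a : ℝ} (ha : a ≠ 0) :
    MeasurePreserving (· * a) nuStar nuStar := by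
  refine ⟨measurable_mul_const a, Measure.ext fun s hs => ?_⟩
  rw [Measure.map_apply (measurable_mul_const a) hs, ← lintegral_indicator_one hs,
    ← lintegral_indicator_one (measurable_mul_const a hs)]
  exact lintegral_comp_mul_right_nuStar ha (measurable_one.indicator hs)

instance : SFinite nuStar := by
  rw [nuStar]
  infer_instance

lemma measurePreserving_Hmeas_dilation (μ : Measure ℝ) [SFinite μ] {a : ℝ} (ha : a ≠ 0) :
    MeasurePreserving (fun η : ℝ × ℝ => (η.1, η.2 * a)) (Hmeas μ) (Hmeas μ) :=
  (MeasurePreserving.id μ).prod (measurePreserving_mul_right_nuStar ha)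

lemma nnnorm_piRep (l : ℝ) (p : ℝ × ℝ) (ψ : ℝ × ℝ → ℂ) (η : ℝ × ℝ) :
    ‖piRep l p ψ η‖₊ = ‖ψ (η.1, η.2 * Real.exp (l * p.1))‖₊ := by
  have hphase : ‖Complex.exp (Complex.I * ((p.1 : ℂ) * η.1 + (p.2 : ℂ) * η.2))‖₊ = 1 := by
    rw [← nnnorm_norm, ← NNReal.coe_eq_one, coe_nnnorm, norm_norm]
    exact_mod_cast Complex.norm_exp_I_mul_ofReal (p.1 * η.1 + p.2 * η.2)
  rw [piRep, nnnorm_mul, hphase, one_mul]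

lemma piRep_piRep (l : ℝ) (p p' : ℝ × ℝ) (ψ : ℝ × ℝ → ℂ) :
    piRep l p (piRep l p' ψ) = piRep l (p.1 + p'.1, p.2 + p'.2 * Real.exp (l * p.1)) ψ := by
  funext η
  have hdilation : η.2 * Real.exp (l * p.1) * Real.exp (l * p'.1)
      = η.2 * Real.exp (l * (p.1 + p'.1)) := by
    rw [mul_assoc, ← Real.exp_add, mul_add]
  simp only [piRep, hdilation, ← mul_assoc, ← Complex.exp_add]
  congr 2
  push_cast
  ring

lemma piRep_zero (l : ℝ) (ψ : ℝ × ℝ → ℂ) : piRep l ((0 : ℝ), (0 : ℝ)) ψ = ψ := by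
  funext η
  simp [piRep]

/-- Each `π(p)` is a unitary operator on `H_μ` (it preserves the `L²` norm and is
invertible, `π(0,0) = id`), and `π` is a representation of the group `G = (ℝ², ∔)`:
`π(p)π(p') = π(p₀+p'₀, p₁+p'₁e^{λp₀})`. -/
theorem piRep_unitary_representation (l : ℝ) (μ : Measure ℝ) [SigmaFinite μ] :
    (∀ p : ℝ × ℝ, ∀ ψ : ℝ × ℝ → ℂ, Measurable ψ →
      ∫⁻ η, (‖piRep l p ψ η‖₊ : ENNReal) ^ 2 ∂(Hmeas μ) =
        ∫⁻ η, (‖ψ η‖₊ : ENNReal) ^ 2 ∂(Hmeas μ)) ∧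
    (∀ p p' : ℝ × ℝ, ∀ ψ : ℝ × ℝ → ℂ,
      piRep l p (piRep l p' ψ) =
        piRep l (p.1 + p'.1, p.2 + p'.2 * Real.exp (l * p.1)) ψ) ∧
    (∀ ψ : ℝ × ℝ → ℂ, piRep l ((0 : ℝ), (0 : ℝ)) ψ = ψ) := by
  refine ⟨fun p ψ hψ => ?_, piRep_piRep l, piRep_zero l⟩
  simp only [nnnorm_piRep]
  exact (measurePreserving_Hmeas_dilation μ (Real.exp_ne_zero (l * p.1))).lintegral_comp
    (f := fun η => (‖ψ η‖₊ : ENNReal) ^ 2) (by fun_prop)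
end

section
/- Let λ ∈ ℝ, μ a measure on ℝ, and H_μ = L²(ℝ×ℝ*, μ ⊗ |η₁|⁻¹dη₁). For g ∈ L¹(ℝ²) define (Ω(g)ψ)(η₀,η₁) = ∫_{ℝ²} g(p)e^{i(p₀η₀+p₁η₁)}ψ(η₀, η₁e^{λp₀}) d²p. For g₁, g₂ ∈ L¹(ℝ²) define the twisted convolution (g₁ ⋆ g₂)(p) := ∫_{ℝ²} g₁(q)·g₂(p₀−q₀, (p₁−q₁)e^{−λq₀})·e^{−λq₀} d²q. Then g₁ ⋆ g₂ ∈ L¹(ℝ²) and Ω(g₁)∘Ω(g₂) = Ω(g₁ ⋆ g₂) as operators on H_μ. Thus the quantization map Ω is a representation of the star-product algebra of κ-Minkowski. -/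
open MeasureTheory

/-- The Weyl quantization `(Ω(g)ψ)(η₀,η₁) = ∫ g(p)e^{i(p₀η₀+p₁η₁)}ψ(η₀,η₁e^{λp₀})d²p`. -/
noncomputable def Omega (l : ℝ) (g : ℝ × ℝ → ℂ) (ψ : ℝ × ℝ → ℂ) (η : ℝ × ℝ) : ℂ :=
  ∫ p : ℝ × ℝ, g p * Complex.exp (Complex.I * ((p.1 : ℂ) * (η.1 : ℂ) + (p.2 : ℂ) * (η.2 : ℂ)))
      * ψ (η.1, η.2 * Real.exp (l * p.1))

/-- The twisted convolution
`(g₁ ⋆ g₂)(p) = ∫ g₁(q)g₂(p₀−q₀, (p₁−q₁)e^{−λq₀})e^{−λq₀}d²q`. -/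
noncomputable def tconv (l : ℝ) (g₁ g₂ : ℝ × ℝ → ℂ) (p : ℝ × ℝ) : ℂ :=
  ∫ q : ℝ × ℝ, g₁ q * g₂ (p.1 - q.1, (p.2 - q.2) * Real.exp (-(l * q.1)))
      * (Real.exp (-(l * q.1)) : ℂ)

/-!
Write `(π(p)ψ)(η) = e^{ip·η} ψ(η₀, η₁e^{λp₀})`, so that `Ω(g) = ∫ g(p) π(p) dp` and
`π(q) π(r) = π(q ∔ r)`. Then `Ω(g₁) Ω(g₂) ψ (η)` is a double integral over `(q, r)`, and the
substitution `r = q⁻¹ ∔ p`, of Jacobian `e^{-λq₀}`, followed by Fubini turns it into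
`Ω(g₁ ⋆ g₂) ψ (η)`; the same substitution in `∫∫ |g₁(q) g₂(r)|` shows `g₁ ⋆ g₂ ∈ L¹`.

Fubini applies for almost every `η`: the dilations `η ↦ (η₀, η₁c)` preserve
`μ ⊗ |η₁|⁻¹dη₁`, so the functions `ψ(η₀, η₁e^{λs})` form a bounded family in `L²`, and
integrating such a family against the `L¹` density `|g₁(q) g₂(r)|` (with `s = q₀ + r₀`) gives
a function that is finite almost everywhere.
-/

open scoped ENNReal

theorem MeasureTheory.Measure.QuasiMeasurePreserving.skew_product {α β γ : Type*}
    [MeasurableSpace α] [MeasurableSpace β] [MeasurableSpace γ] {μ : Measure α}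
    {ν : Measure β} {τ : Measure γ} [SFinite ν] [SFinite τ] {g : α → β → γ}
    (hg : Measurable (Function.uncurry g)) (hgq : ∀ᵐ a ∂μ, QuasiMeasurePreserving (g a) ν τ) :
    QuasiMeasurePreserving (fun z : α × β => (z.1, g z.1 z.2)) (μ.prod ν) (μ.prod τ) := by
  have hm : Measurable fun z : α × β => (z.1, g z.1 z.2) := measurable_fst.prodMk hg
  refine ⟨hm, AbsolutelyContinuous.mk fun s hs hs0 => ?_⟩
  rw [map_apply hm hs, Measure.measure_prod_null (hm hs)]
  rw [Measure.measure_prod_null hs] at hs0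
  filter_upwards [hs0, hgq] with a ha hga
  exact hga.preimage_null ha

theorem Filter.EventuallyEq.ae_ae_comp {X S E : Type*} [MeasurableSpace X] [MeasurableSpace S]
    {ν : Measure X} {ρ : Measure S} [SFinite ν] [SFinite ρ] {T : S → X → X}
    (hT : Measurable (Function.uncurry T))
    (hTν : ∀ s, MeasurePreserving (T s) ν ν) {φ φ' : X → E} (h : φ =ᵐ[ν] φ') :
    ∀ᵐ x ∂ν, ∀ᵐ s ∂ρ, φ (T s x) = φ' (T s x) := by
  set N := toMeasurable ν {x | φ x ≠ φ' x}
  have hN : ∀ᵐ x ∂ν, x ∉ N :=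
    measure_eq_zero_iff_ae_notMem.1 (by rw [measure_toMeasurable]; exact h)
  have hTN : ∀ᵐ s ∂ρ, ∀ᵐ x ∂ν, T s x ∉ N :=
    ae_of_all _ fun s => (hTν s).quasiMeasurePreserving.ae hN
  rw [Measure.ae_ae_comm (p := fun s x => T s x ∉ N)
    ((measurableSet_toMeasurable ν _).compl.preimage hT)] at hTN
  filter_upwards [hTN] with x hx
  filter_upwards [hx] with s hs
  exact not_not.1 fun hne => hs (subset_toMeasurable _ _ hne)

theorem MeasureTheory.ae_lintegral_mul_lt_top {X Z : Type*} [MeasurableSpace X]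
    [MeasurableSpace Z] {ν : Measure X} [SigmaFinite ν] {ρ : Measure Z} [SFinite ρ]
    {k : Z → ℝ≥0∞} (hk : AEMeasurable k ρ) (hk_fin : ∫⁻ z, k z ∂ρ ≠ ∞)
    {f : X → Z → ℝ≥0∞} (hf : Measurable (Function.uncurry f)) {C : ℝ≥0∞} (hC : C ≠ ∞)
    (hfC : ∀ z, ∫⁻ x, f x z ^ 2 ∂ν ≤ C) :
    ∀ᵐ x ∂ν, ∫⁻ z, k z * f x z ∂ρ < ∞ := by
  obtain ⟨w, hw_pos, hw_meas, hw_int⟩ := exists_pos_lintegral_lt_of_sigmaFinite ν one_ne_zero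
  set W : X → ℝ≥0∞ := fun x => min (w x) 1
  have hW : Measurable W := hw_meas.coe_nnreal_ennreal.min measurable_const
  have hW_int : ∫⁻ x, W x ∂ν ≠ ∞ :=
    ((lintegral_mono fun x => min_le_left _ _).trans_lt (hw_int.trans ENNReal.one_lt_top)).ne
  have hWf : ∀ x z, W x * f x z ≤ W x + f x z ^ 2 := by
    intro x z
    rcases le_total (f x z) 1 with h | h
    · exact (mul_le_of_le_one_right' h).trans le_self_add
    · calc W x * f x z ≤ 1 * f x z ^ 2 :=
            mul_le_mul' (min_le_right _ _) (le_self_pow₀ h two_ne_zero)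
        _ ≤ W x + f x z ^ 2 := by rw [one_mul]; exact le_add_self
  -- Since `W ≤ 1`, `W f ≤ W + f²`, and Tonelli bounds `∫ W · ∫ k f` by `∫ k · (∫ W + C)`.
  have hkf : AEMeasurable (Function.uncurry fun x z => k z * f x z) (ν.prod ρ) :=
    hk.comp_snd.mul hf.aemeasurable
  have key : ∫⁻ x, W x * ∫⁻ z, k z * f x z ∂ρ ∂ν ≠ ∞ := by
    refine ne_top_of_le_ne_top
      (ENNReal.mul_ne_top hk_fin (ENNReal.add_ne_top.2 ⟨hW_int, hC⟩)) ?_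
    calc ∫⁻ x, W x * ∫⁻ z, k z * f x z ∂ρ ∂ν
        = ∫⁻ x, ∫⁻ z, W x * (k z * f x z) ∂ρ ∂ν := by
          refine lintegral_congr fun x => (lintegral_const_mul' _ _ ?_).symm
          exact ne_top_of_le_ne_top ENNReal.one_ne_top (min_le_right _ _)
      _ = ∫⁻ z, ∫⁻ x, W x * (k z * f x z) ∂ν ∂ρ :=
          lintegral_lintegral_swap (hW.aemeasurable.comp_fst.mul hkf)
      _ ≤ ∫⁻ z, k z * (∫⁻ x, W x ∂ν + C) ∂ρ := by
          refine lintegral_mono fun z => ?_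
          calc ∫⁻ x, W x * (k z * f x z) ∂ν = k z * ∫⁻ x, W x * f x z ∂ν := by
                have hWfz : Measurable fun x => W x * f x z :=
                  hW.mul (hf.comp measurable_prodMk_right)
                rw [← lintegral_const_mul _ hWfz]
                exact lintegral_congr fun x => by ring
            _ ≤ k z * (∫⁻ x, W x ∂ν + C) := by
                gcongr
                calc ∫⁻ x, W x * f x z ∂ν ≤ ∫⁻ x, W x + f x z ^ 2 ∂ν :=
                      lintegral_mono (hWf · z)
                  _ = ∫⁻ x, W x ∂ν + ∫⁻ x, f x z ^ 2 ∂ν := lintegral_add_left hW _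
                  _ ≤ ∫⁻ x, W x ∂ν + C := by gcongr; exact hfC z
      _ = (∫⁻ z, k z ∂ρ) * (∫⁻ x, W x ∂ν + C) :=
          lintegral_mul_const' _ _ (ENNReal.add_ne_top.2 ⟨hW_int, hC⟩)
  filter_upwards [ae_lt_top' (hW.aemeasurable.mul hkf.lintegral_prod_right) key] with x hx
  have hWx : W x ≠ 0 := (lt_min (ENNReal.coe_pos.2 (hw_pos x)) one_pos).ne'
  exact ENNReal.lt_top_of_mul_ne_top_right hx.ne hWx

noncomputable section

namespace KappaMinkowski

variable {l : ℝ}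

-- `kmul l` is the group law `∔` of `G`, and `kinvMul l q p = q⁻¹ ∔ p`.
def kmul (l : ℝ) (q r : ℝ × ℝ) : ℝ × ℝ := (q.1 + r.1, q.2 + r.2 * Real.exp (l * q.1))

def kinvMul (l : ℝ) (q p : ℝ × ℝ) : ℝ × ℝ :=
  (p.1 - q.1, (p.2 - q.2) * Real.exp (-(l * q.1)))

lemma fst_kmul (q r : ℝ × ℝ) : (kmul l q r).1 = q.1 + r.1 := rfl

@[simp]
lemma kmul_kinvMul (q p : ℝ × ℝ) : kmul l q (kinvMul l q p) = p := by
  simp [kmul, kinvMul, mul_assoc, ← Real.exp_add]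

@[simp]
lemma kinvMul_kmul (q r : ℝ × ℝ) : kinvMul l q (kmul l q r) = r := by
  simp [kmul, kinvMul, mul_assoc, ← Real.exp_add]

@[fun_prop]
lemma continuous_kinvMul : Continuous fun z : (ℝ × ℝ) × (ℝ × ℝ) => kinvMul l z.1 z.2 := by
  unfold kinvMul; fun_prop

@[fun_prop]
lemma continuous_kmul : Continuous fun z : (ℝ × ℝ) × (ℝ × ℝ) => kmul l z.1 z.2 := by
  unfold kmul; fun_prop

def kinvMulEquiv (l : ℝ) (q : ℝ × ℝ) : ℝ × ℝ ≃ᵐ ℝ × ℝ where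
  toFun := kinvMul l q
  invFun := kmul l q
  left_inv := kmul_kinvMul q
  right_inv := kinvMul_kmul q
  measurable_toFun := show Measurable (kinvMul l q) by unfold kinvMul; fun_prop
  measurable_invFun := show Measurable (kmul l q) by unfold kmul; fun_prop

lemma map_kinvMul_volume (q : ℝ × ℝ) :
    Measure.map (kinvMul l q) volume = ENNReal.ofReal (Real.exp (l * q.1)) • volume := by
  have h₂ : Measure.map (fun y : ℝ => (y - q.2) * Real.exp (-(l * q.1))) volume
      = ENNReal.ofReal (Real.exp (l * q.1)) • volume := by
    rw [show (fun y : ℝ => (y - q.2) * Real.exp (-(l * q.1)))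
        = (· * Real.exp (-(l * q.1))) ∘ (· - q.2) from rfl,
      ← Measure.map_map (measurable_mul_const _) (measurable_sub_const _),
      (measurePreserving_sub_right volume q.2).map_eq,
      Real.map_volume_mul_right (Real.exp_ne_zero _), ← Real.exp_neg, neg_neg,
      abs_of_pos (Real.exp_pos _)]
  change Measure.map (Prod.map (· - q.1) fun y => (y - q.2) * Real.exp (-(l * q.1)))
    (volume.prod volume) = _
  rw [← Measure.map_prod_map _ _ (measurable_sub_const _) (by fun_prop),
    (measurePreserving_sub_right volume q.1).map_eq, h₂, Measure.prod_smul_right]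
  rfl

lemma measurePreserving_kinvMul (q : ℝ × ℝ) :
    MeasurePreserving (kinvMul l q) (ENNReal.ofReal (Real.exp (-(l * q.1))) • volume)
      volume where
  measurable := (kinvMulEquiv l q).measurable
  map_eq := by
    rw [Measure.map_smul, map_kinvMul_volume, smul_smul, ← ENNReal.ofReal_mul (by positivity),
      ← Real.exp_add, neg_add_cancel, Real.exp_zero, ENNReal.ofReal_one, one_smul]

section Shear

variable {E : Type*} [NormedAddCommGroup E] [NormedSpace ℝ E]

lemma integral_smul_comp_kinvMul (q : ℝ × ℝ) (f : ℝ × ℝ → E) :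
    ∫ p, Real.exp (-(l * q.1)) • f (kinvMul l q p) = ∫ r, f r := by
  rw [integral_smul, ← (measurePreserving_kinvMul q).integral_comp
    (kinvMulEquiv l q).measurableEmbedding f, integral_smul_measure,
    ENNReal.toReal_ofReal (Real.exp_pos _).le]

lemma integrable_smul_comp_kinvMul {f : ℝ × ℝ → E} (hf : Integrable f) (q : ℝ × ℝ) :
    Integrable (fun p => Real.exp (-(l * q.1)) • f (kinvMul l q p)) := by
  have h := ((measurePreserving_kinvMul (l := l) q).integrable_comp_emb
    (kinvMulEquiv l q).measurableEmbedding).2 hf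
  exact ((integrable_smul_measure (by simp [Real.exp_pos]) ENNReal.ofReal_ne_top).1 h).smul _

lemma quasiMeasurePreserving_kinvMul (q : ℝ × ℝ) :
    Measure.QuasiMeasurePreserving (kinvMul l q) volume volume :=
  ⟨(kinvMulEquiv l q).measurable, by
    rw [map_kinvMul_volume]; exact Measure.smul_absolutelyContinuous⟩

lemma quasiMeasurePreserving_shear :
    Measure.QuasiMeasurePreserving (fun z : (ℝ × ℝ) × (ℝ × ℝ) => (z.1, kinvMul l z.1 z.2))
      ((volume : Measure (ℝ × ℝ)).prod volume) ((volume : Measure (ℝ × ℝ)).prod volume) :=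
  .skew_product continuous_kinvMul.measurable (ae_of_all _ quasiMeasurePreserving_kinvMul)

lemma integrable_smul_comp_shear {F : (ℝ × ℝ) × (ℝ × ℝ) → E}
    (hF : Integrable F ((volume : Measure (ℝ × ℝ)).prod volume)) :
    Integrable (fun z => Real.exp (-(l * z.1.1)) • F (z.1, kinvMul l z.1 z.2))
      ((volume : Measure (ℝ × ℝ)).prod volume) := by
  have hmeas : AEStronglyMeasurable (fun z : (ℝ × ℝ) × (ℝ × ℝ) =>
      Real.exp (-(l * z.1.1)) • F (z.1, kinvMul l z.1 z.2))
      ((volume : Measure (ℝ × ℝ)).prod volume) :=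
    (by fun_prop : Continuous fun z : (ℝ × ℝ) × (ℝ × ℝ) => Real.exp (-(l * z.1.1)))
      |>.aestronglyMeasurable.smul
        (hF.1.comp_quasiMeasurePreserving quasiMeasurePreserving_shear)
  refine (integrable_prod_iff hmeas).2 ⟨?_, ?_⟩
  · filter_upwards [hF.prod_right_ae] with q hq
    exact integrable_smul_comp_kinvMul hq q
  · refine hF.norm.integral_prod_left.congr (ae_of_all _ fun q => ?_)
    dsimp only
    rw [← integral_smul_comp_kinvMul (l := l) q]
    simp only [norm_smul, Real.norm_of_nonneg (Real.exp_pos _).le, smul_eq_mul]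

lemma tconv_eq_integral (g₁ g₂ : ℝ × ℝ → ℂ) (p : ℝ × ℝ) :
    tconv l g₁ g₂ p = ∫ q, Real.exp (-(l * q.1)) • (g₁ q * g₂ (kinvMul l q p)) := by
  refine integral_congr_ae (ae_of_all _ fun q => ?_)
  simp only [kinvMul, Complex.real_smul]
  ring

lemma integrable_tconv {g₁ g₂ : ℝ × ℝ → ℂ} (hg₁ : Integrable g₁) (hg₂ : Integrable g₂) :
    Integrable (tconv l g₁ g₂) := by
  have h := (integrable_smul_comp_shear (l := l) (hg₁.mul_prod hg₂)).integral_prod_right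
  exact h.congr (ae_of_all _ fun p => (tconv_eq_integral g₁ g₂ p).symm)

end Shear

lemma nuStar_eq : nuStar = volume.withDensity fun x => ENNReal.ofReal |x|⁻¹ := by
  rw [nuStar, restrict_compl_singleton]

instance : SigmaFinite nuStar := nuStar_eq ▸ inferInstance

lemma lintegral_comp_mul_right_nuStar {c : ℝ} (hc : c ≠ 0) {h : ℝ → ℝ≥0∞}
    (hh : Measurable h) :
    ∫⁻ x, h (x * c) ∂nuStar = ∫⁻ x, h x ∂nuStar := by
  have hd : Measurable fun x : ℝ => ENNReal.ofReal |x|⁻¹ := by fun_prop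
  have hdc : ∀ x : ℝ,
      ENNReal.ofReal |x|⁻¹ = ENNReal.ofReal |c| * ENNReal.ofReal |x * c|⁻¹ := by
    intro x
    rw [← ENNReal.ofReal_mul (abs_nonneg c), abs_mul, mul_inv, mul_left_comm,
      mul_inv_cancel₀ (abs_ne_zero.2 hc), mul_one]
  rw [nuStar_eq, lintegral_withDensity_eq_lintegral_mul _ hd (g := fun x => h (x * c))
    (by fun_prop), lintegral_withDensity_eq_lintegral_mul _ hd hh]
  calc ∫⁻ x, ENNReal.ofReal |x|⁻¹ * h (x * c)
      = ∫⁻ x, (fun y => ENNReal.ofReal |c| * (ENNReal.ofReal |y|⁻¹ * h y)) (x * c) :=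
        lintegral_congr fun x => by rw [hdc x, mul_assoc]
    _ = ∫⁻ y, ENNReal.ofReal |y|⁻¹ * h y := by
      rw [← lintegral_map (f := fun y => ENNReal.ofReal |c| * (ENNReal.ofReal |y|⁻¹ * h y))
          (by fun_prop) (measurable_mul_const c), Real.map_volume_mul_right hc,
        lintegral_smul_measure, lintegral_const_mul _ (by fun_prop), smul_eq_mul, ← mul_assoc,
        ← ENNReal.ofReal_mul (abs_nonneg _), abs_inv, inv_mul_cancel₀ (abs_ne_zero.2 hc),
        ENNReal.ofReal_one, one_mul]

lemma measurePreserving_mul_right_nuStar {c : ℝ} (hc : c ≠ 0) :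
    MeasurePreserving (· * c) nuStar nuStar where
  measurable := measurable_mul_const c
  map_eq := Measure.ext_of_lintegral _ fun h hh => by
    rw [lintegral_map hh (measurable_mul_const c), lintegral_comp_mul_right_nuStar hc hh]

-- `(π(p)ψ)(η) = phase p η * ψ (dil l p.1 η)`.
def dil (l s : ℝ) (η : ℝ × ℝ) : ℝ × ℝ := (η.1, η.2 * Real.exp (l * s))

lemma dil_dil (s t : ℝ) (η : ℝ × ℝ) : dil l s (dil l t η) = dil l (t + s) η := by
  simp only [dil, mul_assoc, ← Real.exp_add, mul_add]

@[fun_prop]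
lemma measurable_dil : Measurable fun z : ℝ × (ℝ × ℝ) => dil l z.1 z.2 := by
  unfold dil; fun_prop

lemma measurePreserving_dil (μ : Measure ℝ) [SFinite μ] (s : ℝ) :
    MeasurePreserving (dil l s) (Hmeas μ) (Hmeas μ) :=
  (MeasurePreserving.id μ).prod (measurePreserving_mul_right_nuStar (Real.exp_ne_zero _))

def phase (p η : ℝ × ℝ) : ℂ :=
  Complex.exp (Complex.I * ((p.1 : ℂ) * (η.1 : ℂ) + (p.2 : ℂ) * (η.2 : ℂ)))

lemma enorm_phase (p η : ℝ × ℝ) : ‖phase p η‖ₑ = 1 := by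
  rw [← ofReal_norm, phase, Complex.norm_exp]
  simp

lemma phase_mul_phase_dil (q r η : ℝ × ℝ) :
    phase q η * phase r (dil l q.1 η) = phase (kmul l q r) η := by
  simp only [phase, dil, kmul, ← Complex.exp_add]
  push_cast
  ring_nf

lemma Omega_eq (g ψ : ℝ × ℝ → ℂ) (η : ℝ × ℝ) :
    Omega l g ψ η = ∫ p, g p * phase p η * ψ (dil l p.1 η) := rfl

section Hilbert

variable {μ : Measure ℝ} [SigmaFinite μ]

instance : SigmaFinite (Hmeas μ) := by unfold Hmeas; infer_instance

lemma Omega_ae_congr_right {g ψ ψ' : ℝ × ℝ → ℂ} (h : ψ =ᵐ[Hmeas μ] ψ') :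
    Omega l g ψ =ᵐ[Hmeas μ] Omega l g ψ' := by
  have h' := h.ae_ae_comp (ρ := volume) (T := fun p : ℝ × ℝ => dil l p.1)
    (by fun_prop) fun p => measurePreserving_dil μ p.1
  filter_upwards [h'] with η hη
  rw [Omega_eq, Omega_eq]
  exact integral_congr_ae (hη.mono fun p hp => by dsimp only; rw [hp])

lemma ae_lintegral_dil_lt_top {g₁ g₂ ψ : ℝ × ℝ → ℂ} (hg₁ : Integrable g₁)
    (hg₂ : Integrable g₂) (hψ : Measurable ψ) (hψ2 : MemLp ψ 2 (Hmeas μ)) :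
    ∀ᵐ η ∂Hmeas μ, ∫⁻ z, ‖g₁ z.1 * g₂ z.2‖ₑ * ‖ψ (dil l (z.1.1 + z.2.1) η)‖ₑ
      ∂((volume : Measure (ℝ × ℝ)).prod volume) < ∞ := by
  have hψ2' : ∫⁻ ζ, ‖ψ ζ‖ₑ ^ 2 ∂Hmeas μ ≠ ∞ := by
    simpa using (lintegral_rpow_enorm_lt_top_of_eLpNorm_lt_top two_ne_zero
      ENNReal.ofNat_ne_top hψ2.eLpNorm_lt_top).ne
  refine ae_lintegral_mul_lt_top (hg₁.mul_prod hg₂).1.enorm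
    (hg₁.mul_prod hg₂).2.ne (f := fun η z => ‖ψ (dil l (z.1.1 + z.2.1) η)‖ₑ) ?_ hψ2'
    fun z => ?_
  · exact (hψ.comp (by fun_prop)).enorm
  · exact ((measurePreserving_dil μ _).lintegral_comp (hψ.enorm.pow_const 2)).le

lemma Omega_Omega_apply {g₁ g₂ ψ : ℝ × ℝ → ℂ} (hg₁ : AEStronglyMeasurable g₁)
    (hg₂ : AEStronglyMeasurable g₂) (hψ : Measurable ψ) {η : ℝ × ℝ}
    (hη : ∫⁻ z, ‖g₁ z.1 * g₂ z.2‖ₑ * ‖ψ (dil l (z.1.1 + z.2.1) η)‖ₑ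
      ∂((volume : Measure (ℝ × ℝ)).prod volume) < ∞) :
    Omega l g₁ (Omega l g₂ ψ) η = Omega l (tconv l g₁ g₂) ψ η := by
  set Φ : ℝ × ℝ → ℂ := fun p => phase p η * ψ (dil l p.1 η) with hΦ
  set G : (ℝ × ℝ) × (ℝ × ℝ) → ℂ := fun z => g₁ z.1 * g₂ z.2 * Φ (kmul l z.1 z.2) with hG
  have hΦ_meas : Measurable Φ := by
    have : Continuous fun p => phase p η := by unfold phase; fun_prop
    exact this.measurable.mul (hψ.comp (by fun_prop))
  have hG_int : Integrable G ((volume : Measure (ℝ × ℝ)).prod volume) := by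
    refine ⟨(hg₁.comp_fst.mul hg₂.comp_snd).mul
      (hΦ_meas.comp continuous_kmul.measurable).aestronglyMeasurable, ?_⟩
    refine lt_of_eq_of_lt (lintegral_congr fun z => ?_) hη
    simp only [hG, hΦ, enorm_mul, enorm_phase, one_mul, fst_kmul]
  calc Omega l g₁ (Omega l g₂ ψ) η = ∫ q, ∫ r, G (q, r) := by
        rw [Omega_eq]
        refine integral_congr_ae (ae_of_all _ fun q => ?_)
        dsimp only
        rw [Omega_eq, ← integral_const_mul]
        refine integral_congr_ae (ae_of_all _ fun r => ?_)
        simp only [hG, hΦ, dil_dil, fst_kmul, ← phase_mul_phase_dil]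
        ring
    _ = ∫ q, ∫ p, Real.exp (-(l * q.1)) • G (q, kinvMul l q p) :=
        integral_congr_ae (ae_of_all _ fun q => (integral_smul_comp_kinvMul q _).symm)
    _ = ∫ p, ∫ q, Real.exp (-(l * q.1)) • G (q, kinvMul l q p) :=
        integral_integral_swap (integrable_smul_comp_shear hG_int)
    _ = Omega l (tconv l g₁ g₂) ψ η := by
        rw [Omega_eq]
        refine integral_congr_ae (ae_of_all _ fun p => ?_)
        simp only [hG, hΦ, kmul_kinvMul, mul_assoc, tconv_eq_integral, ← integral_mul_const,
          smul_mul_assoc]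

lemma Omega_Omega_ae_eq {g₁ g₂ ψ : ℝ × ℝ → ℂ} (hg₁ : Integrable g₁) (hg₂ : Integrable g₂)
    (hψ : Measurable ψ) (hψ2 : MemLp ψ 2 (Hmeas μ)) :
    Omega l g₁ (Omega l g₂ ψ) =ᵐ[Hmeas μ] Omega l (tconv l g₁ g₂) ψ := by
  filter_upwards [ae_lintegral_dil_lt_top hg₁ hg₂ hψ hψ2] with η hη
  exact Omega_Omega_apply hg₁.1 hg₂.1 hψ hη

end Hilbert

end KappaMinkowski

end

/-- For `g₁, g₂ ∈ L¹(ℝ²)`, the twisted convolution `g₁ ⋆ g₂` is in `L¹(ℝ²)` and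
`Ω(g₁)∘Ω(g₂) = Ω(g₁ ⋆ g₂)` as operators on `H_μ`: the quantization map is a
representation of the star-product algebra of κ-Minkowski. -/
theorem Omega_tconv (l : ℝ) (μ : Measure ℝ) [SigmaFinite μ]
    (g₁ g₂ : ℝ × ℝ → ℂ)
    (hg₁ : Integrable g₁ (volume : Measure (ℝ × ℝ)))
    (hg₂ : Integrable g₂ (volume : Measure (ℝ × ℝ))) :
    Integrable (tconv l g₁ g₂) (volume : Measure (ℝ × ℝ)) ∧
    ∀ ψ : ℝ × ℝ → ℂ, MemLp ψ 2 (Hmeas μ) →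
      Omega l g₁ (Omega l g₂ ψ) =ᵐ[Hmeas μ] Omega l (tconv l g₁ g₂) ψ := by
  refine ⟨KappaMinkowski.integrable_tconv hg₁ hg₂, fun ψ hψ => ?_⟩
  -- `p ↦ ψ (η₀, η₁e^{λp₀})` need not be measurable unless `ψ` itself is.
  have hψψ' : ψ =ᵐ[Hmeas μ] hψ.1.mk ψ := hψ.1.ae_eq_mk
  calc Omega l g₁ (Omega l g₂ ψ)
      =ᵐ[Hmeas μ] Omega l g₁ (Omega l g₂ (hψ.1.mk ψ)) :=
        KappaMinkowski.Omega_ae_congr_right (KappaMinkowski.Omega_ae_congr_right hψψ')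
    _ =ᵐ[Hmeas μ] Omega l (tconv l g₁ g₂) (hψ.1.mk ψ) :=
        KappaMinkowski.Omega_Omega_ae_eq hg₁ hg₂ hψ.1.stronglyMeasurable_mk.measurable
          (hψ.ae_eq hψψ')
    _ =ᵐ[Hmeas μ] Omega l (tconv l g₁ g₂) ψ :=
        KappaMinkowski.Omega_ae_congr_right hψψ'.symm
end

section
/- Let λ ∈ ℝ, λ ≠ 0, and define F : ℝ² → ℂ by F(p₀,p₁) = λ⁻¹sinh(λp₀) + (λ/2)p₁²e^{−λp₀} + i·e^{−λp₀}p₁ (that is, F = r·e^{iθ} in the deformed polar coordinates of the quantum Euclidean group). Then F satisfies the first-order PDE expressing that it is an eigenfunction of the boost vector field χ(N): for all (p₀,p₁) ∈ ℝ², p₁·∂F/∂p₀(p₀,p₁) + ((1−e^{2λp₀})/(2λ) + (λ/2)p₁²)·∂F/∂p₁(p₀,p₁) = −i·F(p₀,p₁). Equivalently, [χ(N), F] = F where χ(N) = i p₁∂_{p₀} + i((1−e^{2λp₀})/(2λ) + (λ/2)p₁²)∂_{p₁}. -/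
/-!
The partial derivatives of `F` are read off its restrictions to horizontal and vertical lines.
Writing `E = e^{λp₀}`, so that `sinh(λp₀) = (E - E⁻¹)/2`, `cosh(λp₀) = (E + E⁻¹)/2` and
`e^{2λp₀} = E²`, the eigenfunction equation becomes an identity between rational functions of
`E`, `p₁` and `λ`.
-/

/-- The function `F = re^{iθ}` in the deformed polar coordinates of the quantum
Euclidean group: `F(p₀,p₁) = λ⁻¹sinh(λp₀) + (λ/2)p₁²e^{−λp₀} + i·e^{−λp₀}p₁`. -/
noncomputable def Fsym (l : ℝ) (p : ℝ × ℝ) : ℂ :=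
  ((l⁻¹ * Real.sinh (l * p.1) + l / 2 * p.2 ^ 2 * Real.exp (-(l * p.1)) : ℝ) : ℂ) +
    Complex.I * ((Real.exp (-(l * p.1)) * p.2 : ℝ) : ℂ)

section Slices

variable {𝕜 G : Type*} [NontriviallyNormedField 𝕜] [NormedAddCommGroup G] [NormedSpace 𝕜 G]
  {f : 𝕜 × 𝕜 → G} {a b : 𝕜} {f' : G}

theorem DifferentiableAt.fderiv_apply_one_zero (hf : DifferentiableAt 𝕜 f (a, b))
    (h : HasDerivAt (fun t => f (t, b)) f' a) : fderiv 𝕜 f (a, b) (1, 0) = f' :=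
  (hf.hasFDerivAt.comp_hasDerivAt a ((hasDerivAt_id a).prodMk (hasDerivAt_const a b))).unique h

theorem DifferentiableAt.fderiv_apply_zero_one (hf : DifferentiableAt 𝕜 f (a, b))
    (h : HasDerivAt (fun t => f (a, t)) f' b) : fderiv 𝕜 f (a, b) (0, 1) = f' :=
  (hf.hasFDerivAt.comp_hasDerivAt b ((hasDerivAt_const b a).prodMk (hasDerivAt_id b))).unique h

end Slices

open Complex

theorem differentiable_Fsym (l : ℝ) : Differentiable ℝ (Fsym l) := by
  unfold Fsym; fun_prop

theorem hasDerivAt_Fsym_fst {l : ℝ} (hl : l ≠ 0) (a b : ℝ) :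
    HasDerivAt (fun t => Fsym l (t, b))
      (((Real.cosh (l * a) - l ^ 2 / 2 * b ^ 2 * Real.exp (-(l * a)) : ℝ) : ℂ) +
        I * ((-l * Real.exp (-(l * a)) * b : ℝ) : ℂ)) a := by
  have hlin : HasDerivAt (fun t : ℝ => l * t) l a := by
    simpa using (hasDerivAt_id a).const_mul l
  have hexp : HasDerivAt (fun t => Real.exp (-(l * t))) (Real.exp (-(l * a)) * -l) a :=
    hlin.neg.exp
  have hre := ((hlin.sinh.const_mul l⁻¹).add (hexp.const_mul (l / 2 * b ^ 2))).ofReal_comp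
  have him := ((hexp.mul_const b).ofReal_comp).const_mul I
  refine (hre.add him).congr_deriv ?_
  congr 2
  · field_simp; ring
  · push_cast; ring

theorem hasDerivAt_Fsym_snd (l a b : ℝ) :
    HasDerivAt (fun t => Fsym l (a, t))
      (((l * b * Real.exp (-(l * a)) : ℝ) : ℂ) + I * (Real.exp (-(l * a)) : ℂ)) b := by
  have hre := ((((hasDerivAt_pow 2 b).const_mul (l / 2)).mul_const
    (Real.exp (-(l * a)))).const_add (l⁻¹ * Real.sinh (l * a))).ofReal_comp
  have him := (((hasDerivAt_id b).const_mul (Real.exp (-(l * a)))).ofReal_comp).const_mul I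
  refine (hre.add him).congr_deriv ?_
  push_cast
  ring

/-- `F = re^{iθ}` is an eigenfunction of the boost vector field `χ(N)`:
`p₁∂₀F + ((1−e^{2λp₀})/(2λ) + (λ/2)p₁²)∂₁F = −iF`, i.e. `[χ(N), F] = F`. -/
theorem boost_eigenfunction (l : ℝ) (hl : l ≠ 0) (p : ℝ × ℝ) :
    ((p.2 : ℝ) : ℂ) * fderiv ℝ (Fsym l) p (1, 0) +
      (((1 - Real.exp (2 * l * p.1)) / (2 * l) + l / 2 * p.2 ^ 2 : ℝ) : ℂ) *
        fderiv ℝ (Fsym l) p (0, 1) =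
      -Complex.I * Fsym l p := by
  obtain ⟨a, b⟩ := p
  rw [(differentiable_Fsym l _).fderiv_apply_one_zero (hasDerivAt_Fsym_fst hl a b),
    (differentiable_Fsym l _).fderiv_apply_zero_one (hasDerivAt_Fsym_snd l a b)]
  have hE : Real.exp (l * a) ≠ 0 := (Real.exp_pos _).ne'
  have hsq : Real.exp (2 * l * a) = Real.exp (l * a) ^ 2 := by
    rw [← Real.exp_nat_mul]; ring_nf
  simp only [Fsym, Real.sinh_eq, Real.cosh_eq, Real.exp_neg, hsq]
  generalize Real.exp (l * a) = E at hE
  have hE' : (E : ℂ) ≠ 0 := by exact_mod_cast hE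
  have hl' : (l : ℂ) ≠ 0 := by exact_mod_cast hl
  push_cast
  field_simp
  linear_combination (2 * b * l : ℂ) * I_sq
end
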